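/- Let A1, A2 ∈ ℂ^{n×n}, F1, F2 ∈ ℂ^{p×p}, C1, C2 ∈ ℂ^{n×p}. The coupled Stein equations X1 = A1X1F1 + A2^#X2F1 + A1X2^#F2 + A2^#X1^#F2 + C1 and X2 = A1^#X1^#F2 + A2X2^#F2 + A1^#X2F1 + A2X1F1 + C2 have exactly one solution (X1, X2) with X1, X2 ∈ ℂ^{n×p} if and only if α·β ≠ 1 for every eigenvalue α of the 2n×2n matrix lift(A1,A2) and every eigenvalue β of the 2p×2p matrix lift(F1,F2). -/

import Mathlib

set_option linter.unusedSectionVars false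

open Matrix

/-- Entrywise complex conjugate of a complex matrix. -/
noncomputable def mconj {n m : Type*} (M : Matrix n m ℂ) : Matrix n m ℂ :=
  M.map (starRingEnd ℂ)

/-- The complex lifting `lift(M1,M2) = [[M1, M2^#],[M2, M1^#]]`. -/
noncomputable def clift {n m : Type*} (M1 M2 : Matrix n m ℂ) :
    Matrix (n ⊕ n) (m ⊕ m) ℂ :=
  Matrix.fromBlocks M1 (mconj M2) M2 (mconj M1)

section Aux

open Polynomial

lemma mconj_mconj {N P : Type*} (M : Matrix N P ℂ) : mconj (mconj M) = M := by
  ext i j; simp [mconj]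

lemma mconj_add {N P : Type*} (M M' : Matrix N P ℂ) :
    mconj (M + M') = mconj M + mconj M' := by
  ext i j; simp [mconj]

lemma mconj_mul {N P Q : Type*} [Fintype P] (M : Matrix N P ℂ) (M' : Matrix P Q ℂ) :
    mconj (M * M') = mconj M * mconj M' := by
  simp [mconj, Matrix.map_mul]

lemma clift_add {N P : Type*} (M1 M2 N1 N2 : Matrix N P ℂ) :
    clift (M1 + N1) (M2 + N2) = clift M1 M2 + clift N1 N2 := by
  simp [clift, mconj_add, Matrix.fromBlocks_add]

lemma clift_mul {N P m : Type*} [Fintype m] (M1 M2 : Matrix N m ℂ) (N1 N2 : Matrix m P ℂ) :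
    clift M1 M2 * clift N1 N2
      = clift (M1 * N1 + mconj M2 * N2) (M2 * N1 + mconj M1 * N2) := by
  simp only [clift, Matrix.fromBlocks_multiply, mconj_add, mconj_mul, mconj_mconj]
  rw [Matrix.fromBlocks_inj]
  exact ⟨rfl, add_comm _ _, rfl, add_comm _ _⟩

lemma clift_inj {N P : Type*} {M1 M2 N1 N2 : Matrix N P ℂ} (h : clift M1 M2 = clift N1 N2) :
    M1 = N1 ∧ M2 = N2 := by
  constructor
  · have := congrArg Matrix.toBlocks₁₁ h; simpa [clift] using this
  · have := congrArg Matrix.toBlocks₂₁ h; simpa [clift] using this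

/-- The conjugate-linear involution whose fixed points are exactly the liftings. -/
noncomputable def sconj {n m : Type*} (Y : Matrix (n ⊕ n) (m ⊕ m) ℂ) :
    Matrix (n ⊕ n) (m ⊕ m) ℂ :=
  mconj (Y.submatrix Sum.swap Sum.swap)

lemma sconj_apply {n m : Type*} (Y : Matrix (n ⊕ n) (m ⊕ m) ℂ) (i j) :
    sconj Y i j = starRingEnd ℂ (Y i.swap j.swap) := rfl

lemma sconj_sconj {n m : Type*} (Y : Matrix (n ⊕ n) (m ⊕ m) ℂ) : sconj (sconj Y) = Y := by
  ext i j; simp [sconj_apply]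

lemma sconj_add {n m : Type*} (Y Z : Matrix (n ⊕ n) (m ⊕ m) ℂ) :
    sconj (Y + Z) = sconj Y + sconj Z := by
  ext i j; simp [sconj_apply]

lemma sconj_sub {n m : Type*} (Y Z : Matrix (n ⊕ n) (m ⊕ m) ℂ) :
    sconj (Y - Z) = sconj Y - sconj Z := by
  ext i j; simp [sconj_apply]

lemma sconj_smul {n m : Type*} (c : ℂ) (Y : Matrix (n ⊕ n) (m ⊕ m) ℂ) :
    sconj (c • Y) = (starRingEnd ℂ c) • sconj Y := by
  ext i j; simp [sconj_apply]

lemma sconj_mul {n m p : Type*} [Fintype m]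
    (Y : Matrix (n ⊕ n) (m ⊕ m) ℂ) (Z : Matrix (m ⊕ m) (p ⊕ p) ℂ) :
    sconj (Y * Z) = sconj Y * sconj Z := by
  unfold sconj
  rw [← mconj_mul]
  exact congrArg mconj (Matrix.submatrix_mul_equiv Y Z Sum.swap (Equiv.sumComm m m) Sum.swap).symm

lemma sconj_clift {n m : Type*} (M1 M2 : Matrix n m ℂ) :
    sconj (clift M1 M2) = clift M1 M2 := by
  ext i j
  rcases i with i | i <;> rcases j with j | j <;>
    simp [sconj_apply, clift, mconj, Matrix.fromBlocks]

lemma eq_clift_of_sconj_eq {n m : Type*} {Y : Matrix (n ⊕ n) (m ⊕ m) ℂ}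
    (h : sconj Y = Y) : Y = clift Y.toBlocks₁₁ Y.toBlocks₂₁ := by
  ext i j
  rcases i with i | i <;> rcases j with j | j
  · simp [clift, Matrix.fromBlocks, Matrix.toBlocks₁₁]
  · have := congrFun (congrFun h (Sum.inl i)) (Sum.inr j)
    simp only [sconj_apply, Sum.swap_inl, Sum.swap_inr] at this
    simp [clift, Matrix.fromBlocks, mconj, Matrix.toBlocks₂₁, ← this]
  · simp [clift, Matrix.fromBlocks, Matrix.toBlocks₂₁]
  · have := congrFun (congrFun h (Sum.inr i)) (Sum.inr j)
    simp only [sconj_apply, Sum.swap_inl, Sum.swap_inr] at this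
    simp [clift, Matrix.fromBlocks, mconj, Matrix.toBlocks₁₁, ← this]

variable {N P : Type*} [Fintype N] [Fintype P] [DecidableEq N] [DecidableEq P]

lemma mem_spectrum_iff_det {M : Matrix N N ℂ} {μ : ℂ} :
    μ ∈ spectrum ℂ M ↔ (μ • (1 : Matrix N N ℂ) - M).det = 0 := by
  rw [spectrum.mem_iff, Algebra.algebraMap_eq_smul_one, Matrix.isUnit_iff_isUnit_det,
    isUnit_iff_ne_zero, not_not]

lemma root_charpoly_mem_spectrum {M : Matrix N N ℂ} {μ : ℂ}
    (h : M.charpoly.IsRoot μ) : μ ∈ spectrum ℂ M := by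
  rw [mem_spectrum_iff_det]
  have hmap : (Matrix.charmatrix M).map (Polynomial.evalRingHom μ)
      = μ • (1 : Matrix N N ℂ) - M := by
    ext i j
    by_cases hij : i = j <;>
      simp [Matrix.charmatrix_apply, Matrix.diagonal_apply, hij, Matrix.one_apply,
        Matrix.smul_apply]
  have h2 := (Polynomial.evalRingHom μ).map_det (Matrix.charmatrix M)
  rw [RingHom.mapMatrix_apply, hmap] at h2
  rw [← h2]
  simpa [Matrix.charpoly] using h

lemma exists_eigenvector {M : Matrix N N ℂ} {μ : ℂ} (h : μ ∈ spectrum ℂ M) :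
    ∃ v : N → ℂ, v ≠ 0 ∧ M.mulVec v = μ • v := by
  rw [mem_spectrum_iff_det] at h
  obtain ⟨v, hv, hMv⟩ := (Matrix.exists_mulVec_eq_zero_iff).2 h
  refine ⟨v, hv, ?_⟩
  have h2 : (μ • (1 : Matrix N N ℂ) - M).mulVec v = μ • v - M.mulVec v := by
    rw [Matrix.sub_mulVec, Matrix.smul_mulVec, Matrix.one_mulVec]
  rw [h2] at hMv
  exact (sub_eq_zero.mp hMv).symm

lemma spectrum_transpose (M : Matrix N N ℂ) : spectrum ℂ Mᵀ = spectrum ℂ M := by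
  ext μ
  rw [mem_spectrum_iff_det, mem_spectrum_iff_det]
  have h2 : μ • (1 : Matrix N N ℂ) - Mᵀ = (μ • (1 : Matrix N N ℂ) - M)ᵀ := by
    rw [Matrix.transpose_sub, Matrix.transpose_smul, Matrix.transpose_one]
  rw [h2, Matrix.det_transpose]

/-- Injectivity of the Stein operator under the spectral condition. -/
lemma stein_kernel {A : Matrix N N ℂ} {F : Matrix P P ℂ}
    (h : ∀ α ∈ spectrum ℂ A, ∀ β ∈ spectrum ℂ F, α * β ≠ 1)
    {Y : Matrix N P ℂ} (hY : A * Y * F = Y) : Y = 0 := by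
  have key : ∀ l : List ℂ, (l.map (fun β => 1 - β • A)).prod * Y
      = A ^ l.length * Y * (l.map (fun β => F - β • 1)).prod := by
    intro l
    induction l with
    | nil => simp
    | cons β t ih =>
      simp only [List.map_cons, List.prod_cons, List.length_cons]
      rw [Matrix.mul_assoc, ih]
      set k := t.length with hk
      set Pt := (t.map fun β => F - β • 1).prod with hPt
      have e : A ^ (k + 1) * Y * F = A ^ k * Y := by
        rw [pow_succ, Matrix.mul_assoc (A ^ k) A Y, Matrix.mul_assoc (A ^ k) (A * Y) F, hY]
      simp only [sub_mul, Matrix.smul_mul, Matrix.mul_sub, Matrix.mul_smul,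
        Matrix.one_mul, one_mul]
      rw [Matrix.sub_mul, Matrix.one_mul, Matrix.smul_mul]
      have e2 : A * (A ^ k * Y * Pt) = A ^ (k + 1) * Y * Pt := by
        rw [← Matrix.mul_assoc A (A ^ k * Y) Pt, ← Matrix.mul_assoc A (A ^ k) Y, ← pow_succ']
      rw [e2, ← Matrix.mul_assoc (A ^ (k + 1) * Y) F Pt, e]
  set l := F.charpoly.roots.toList with hl
  have hmem : ∀ β ∈ l, β ∈ spectrum ℂ F := by
    intro β hβ
    apply root_charpoly_mem_spectrum
    have hroot : β ∈ F.charpoly.roots := by rwa [hl, Multiset.mem_toList] at hβ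
    exact (Polynomial.mem_roots (Matrix.charpoly_monic F).ne_zero).1 hroot
  have hsplit : F.charpoly = (l.map (fun β => X - C β)).prod := by
    have h1 := (IsAlgClosed.splits F.charpoly).eq_prod_roots_of_monic (Matrix.charpoly_monic F)
    calc F.charpoly = (F.charpoly.roots.map (fun a => X - C a)).prod := h1
      _ = (((l : Multiset ℂ)).map (fun a => X - C a)).prod := by rw [hl, Multiset.coe_toList]
      _ = ((l.map (fun a => X - C a) : List ℂ[X]) : Multiset ℂ[X]).prod := by
          rw [Multiset.map_coe]
      _ = (l.map (fun β => X - C β)).prod := Multiset.prod_coe _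
  have hzero : (l.map (fun β => F - β • 1)).prod = 0 := by
    have h1 := Matrix.aeval_self_charpoly F
    rw [hsplit, map_list_prod (Polynomial.aeval F), List.map_map] at h1
    simpa only [Function.comp_def, map_sub, Polynomial.aeval_X, Polynomial.aeval_C,
      Algebra.algebraMap_eq_smul_one] using h1
  have hunit : ∀ M ∈ l.map (fun β => 1 - β • A), IsUnit M := by
    intro M hM
    obtain ⟨β, hβl, rfl⟩ := List.mem_map.1 hM
    by_contra hnu
    rw [Matrix.isUnit_iff_isUnit_det, isUnit_iff_ne_zero, not_not] at hnu
    have hβ0 : β ≠ 0 := by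
      rintro rfl; simp at hnu
    have hdet : (β⁻¹ • (1 : Matrix N N ℂ) - A).det = 0 := by
      have hfac : (1 : Matrix N N ℂ) - β • A = β • (β⁻¹ • (1 : Matrix N N ℂ) - A) := by
        rw [smul_sub, smul_smul, mul_inv_cancel₀ hβ0, one_smul]
      rw [hfac, Matrix.det_smul] at hnu
      exact (mul_eq_zero.1 hnu).resolve_left (pow_ne_zero _ hβ0)
    exact h β⁻¹ (mem_spectrum_iff_det.2 hdet) β (hmem β hβl) (inv_mul_cancel₀ hβ0)
  have hYzero : (l.map (fun β => 1 - β • A)).prod * Y = 0 := by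
    rw [key l, hzero, Matrix.mul_zero]
  obtain ⟨u, hu⟩ := List.prod_isUnit hunit
  calc Y = (↑u⁻¹ : Matrix N N ℂ) * ((↑u : Matrix N N ℂ) * Y) := by
        rw [← Matrix.mul_assoc, Units.inv_mul, Matrix.one_mul]
    _ = (↑u⁻¹ : Matrix N N ℂ) * (0 : Matrix N P ℂ) := by rw [hu, hYzero]
    _ = 0 := Matrix.mul_zero _

/-- Existence and uniqueness for the Stein equation under the spectral condition. -/
lemma stein_existsUnique (A : Matrix N N ℂ) (F : Matrix P P ℂ) (C : Matrix N P ℂ)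
    (h : ∀ α ∈ spectrum ℂ A, ∀ β ∈ spectrum ℂ F, α * β ≠ 1) :
    ∃! Y : Matrix N P ℂ, Y = A * Y * F + C := by
  let L : Matrix N P ℂ →ₗ[ℂ] Matrix N P ℂ :=
    { toFun := fun Y => Y - A * Y * F
      map_add' := by
        intro Y Z
        rw [Matrix.mul_add, Matrix.add_mul]
        abel
      map_smul' := by
        intro c Y
        rw [Matrix.mul_smul, Matrix.smul_mul, smul_sub, RingHom.id_apply]
      }
  have hinj : Function.Injective L := by
    intro Y Z hYZ
    have h0 : L (Y - Z) = 0 := by rw [map_sub, hYZ, sub_self]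
    have h0' : (Y - Z) - A * (Y - Z) * F = 0 := h0
    have h1 : A * (Y - Z) * F = Y - Z := (sub_eq_zero.mp h0').symm
    exact sub_eq_zero.1 (stein_kernel h h1)
  have hsurj : Function.Surjective L := LinearMap.injective_iff_surjective.1 hinj
  obtain ⟨Y, hY⟩ := hsurj C
  have hY' : Y - A * Y * F = C := hY
  refine ⟨Y, sub_eq_iff_eq_add'.1 hY', ?_⟩
  intro Z hZ
  apply hinj
  have hZ' : L Z = C := sub_eq_iff_eq_add'.2 hZ
  rw [hZ', ← hY']
  rfl

end Aux

lemma mul_rank_one {N P : Type*} [Fintype N] [Fintype P]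
    (A : Matrix N N ℂ) (F : Matrix P P ℂ) (v : N → ℂ) (w : P → ℂ) :
    A * (Matrix.of fun i j => v i * w j) * F
      = Matrix.of fun i j => A.mulVec v i * Fᵀ.mulVec w j := by
  ext i j
  simp only [Matrix.mul_apply, Matrix.of_apply, Matrix.mulVec, dotProduct,
    Matrix.transpose_apply]
  trans (∑ l, ∑ k, A i k * v k * (F l j * w l))
  · apply Finset.sum_congr rfl; intro l _
    rw [Finset.sum_mul]
    apply Finset.sum_congr rfl; intro k _; ring
  · rw [Finset.sum_comm]
    trans (∑ k, (A i k * v k) * (∑ l, F l j * w l))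
    · apply Finset.sum_congr rfl; intro k _
      rw [Finset.mul_sum]
    · rw [← Finset.sum_mul]

lemma solves_iff {N P : Type*} [Fintype N] [Fintype P]
    (A1 A2 : Matrix N N ℂ) (F1 F2 : Matrix P P ℂ) (C1 C2 X1 X2 : Matrix N P ℂ) :
    (X1 = A1 * X1 * F1 + mconj A2 * X2 * F1 + A1 * mconj X2 * F2
          + mconj A2 * mconj X1 * F2 + C1 ∧
     X2 = mconj A1 * mconj X1 * F2 + A2 * mconj X2 * F2 + mconj A1 * X2 * F1
          + A2 * X1 * F1 + C2)
    ↔ clift X1 X2 = clift A1 A2 * clift X1 X2 * clift F1 F2 + clift C1 C2 := by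
  have hR : (A1 * X1 + mconj A2 * X2) * F1 + mconj (A2 * X1 + mconj A1 * X2) * F2 + C1
      = A1 * X1 * F1 + mconj A2 * X2 * F1 + A1 * mconj X2 * F2
          + mconj A2 * mconj X1 * F2 + C1 := by
    rw [mconj_add, mconj_mul, mconj_mul, mconj_mconj, Matrix.add_mul, Matrix.add_mul]
    abel
  have hS : (A2 * X1 + mconj A1 * X2) * F1 + mconj (A1 * X1 + mconj A2 * X2) * F2 + C2
      = mconj A1 * mconj X1 * F2 + A2 * mconj X2 * F2 + mconj A1 * X2 * F1
          + A2 * X1 * F1 + C2 := by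
    rw [mconj_add, mconj_mul, mconj_mul, mconj_mconj, Matrix.add_mul, Matrix.add_mul]
    abel
  rw [clift_mul, clift_mul, ← clift_add, hR, hS]
  constructor
  · rintro ⟨h1, h2⟩
    exact congrArg₂ clift h1 h2
  · intro hh
    exact clift_inj hh


/-- the coupled Stein equations have exactly one solution iff
`α·β ≠ 1` for all eigenvalues `α` of `lift(A1,A2)` and `β` of `lift(F1,F2)`. -/
theorem stmt_17 {n p : ℕ}
    (A1 A2 : Matrix (Fin n) (Fin n) ℂ) (F1 F2 : Matrix (Fin p) (Fin p) ℂ)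
    (C1 C2 : Matrix (Fin n) (Fin p) ℂ) :
    (∃! X : Matrix (Fin n) (Fin p) ℂ × Matrix (Fin n) (Fin p) ℂ,
      X.1 = A1 * X.1 * F1 + mconj A2 * X.2 * F1 + A1 * mconj X.2 * F2
          + mconj A2 * mconj X.1 * F2 + C1 ∧
      X.2 = mconj A1 * mconj X.1 * F2 + A2 * mconj X.2 * F2 + mconj A1 * X.2 * F1
          + A2 * X.1 * F1 + C2)
    ↔ ∀ α ∈ spectrum ℂ (clift A1 A2), ∀ β ∈ spectrum ℂ (clift F1 F2), α * β ≠ 1 := by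
  constructor
  · intro hEU α hα β hβ
    by_contra hcon
    obtain ⟨v, hv, hAv⟩ := exists_eigenvector hα
    have hβT : β ∈ spectrum ℂ (clift F1 F2)ᵀ := by
      rw [spectrum_transpose]; exact hβ
    obtain ⟨w, hw, hFw⟩ := exists_eigenvector hβT
    set K : Matrix (Fin n ⊕ Fin n) (Fin p ⊕ Fin p) ℂ :=
      Matrix.of fun i j => v i * w j with hK
    have hKne : K ≠ 0 := by
      obtain ⟨i, hi⟩ := Function.ne_iff.1 hv
      obtain ⟨j, hj⟩ := Function.ne_iff.1 hw
      intro h0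
      have h1 := congrFun (congrFun h0 i) j
      simp only [hK, Matrix.of_apply, Matrix.zero_apply] at h1
      simp only [Pi.zero_apply] at hi hj
      exact (mul_ne_zero hi hj) h1
    have hKfix : clift A1 A2 * K * clift F1 F2 = K := by
      rw [hK, mul_rank_one, hAv, hFw]
      ext i j
      simp only [Matrix.of_apply, Pi.smul_apply, smul_eq_mul]
      calc α * v i * (β * w j) = (α * β) * (v i * w j) := by ring
        _ = v i * w j := by rw [hcon, one_mul]
    have hKs : clift A1 A2 * sconj K * clift F1 F2 = sconj K := by
      conv_lhs => rw [← sconj_clift A1 A2, ← sconj_clift F1 F2]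
      rw [← sconj_mul, ← sconj_mul, hKfix]
    have hD : ∃ D : Matrix (Fin n ⊕ Fin n) (Fin p ⊕ Fin p) ℂ,
        D ≠ 0 ∧ sconj D = D ∧ clift A1 A2 * D * clift F1 F2 = D := by
      by_cases hcase : K + sconj K ≠ 0
      · refine ⟨K + sconj K, hcase, ?_, ?_⟩
        · rw [sconj_add, sconj_sconj, add_comm]
        · rw [Matrix.mul_add, Matrix.add_mul, hKfix, hKs]
      · push_neg at hcase
        refine ⟨Complex.I • (K - sconj K), ?_, ?_, ?_⟩
        · intro h0
          apply hKne
          have h1 : sconj K = -K := eq_neg_of_add_eq_zero_right hcase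
          rw [h1, sub_neg_eq_add] at h0
          have h2 : K + K = 0 := by
            rcases smul_eq_zero.mp h0 with h | h
            · exact absurd h Complex.I_ne_zero
            · exact h
          have h3 : (2 : ℂ) • K = 0 := by rw [two_smul]; exact h2
          simpa [smul_eq_zero] using h3
        · rw [sconj_smul, sconj_sub, sconj_sconj, Complex.conj_I, neg_smul, ← smul_neg,
            neg_sub]
        · rw [Matrix.mul_smul, Matrix.smul_mul, Matrix.mul_sub, Matrix.sub_mul, hKfix, hKs]
    obtain ⟨D, hDne, hDs, hDfix⟩ := hD
    have hDc := eq_clift_of_sconj_eq hDs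
    obtain ⟨X, hX, hXuniq⟩ := hEU
    have hXeq := (solves_iff A1 A2 F1 F2 C1 C2 X.1 X.2).1 hX
    have hX'eq : clift (X.1 + D.toBlocks₁₁) (X.2 + D.toBlocks₂₁)
        = clift A1 A2 * clift (X.1 + D.toBlocks₁₁) (X.2 + D.toBlocks₂₁) * clift F1 F2
          + clift C1 C2 := by
      rw [clift_add, ← hDc]
      calc clift X.1 X.2 + D
          = (clift A1 A2 * clift X.1 X.2 * clift F1 F2 + clift C1 C2)
            + clift A1 A2 * D * clift F1 F2 := by rw [← hXeq, hDfix]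
        _ = clift A1 A2 * (clift X.1 X.2 + D) * clift F1 F2 + clift C1 C2 := by
            rw [Matrix.mul_add, Matrix.add_mul]; abel
    have hX' := (solves_iff A1 A2 F1 F2 C1 C2 (X.1 + D.toBlocks₁₁) (X.2 + D.toBlocks₂₁)).2 hX'eq
    have h1 := hXuniq (X.1 + D.toBlocks₁₁, X.2 + D.toBlocks₂₁) hX'
    have hD1 : D.toBlocks₁₁ = 0 := by
      have := congrArg Prod.fst h1
      simpa using this
    have hD2 : D.toBlocks₂₁ = 0 := by
      have := congrArg Prod.snd h1
      simpa using this
    apply hDne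
    rw [hDc, hD1, hD2]
    ext i j
    rcases i with i | i <;> rcases j with j | j <;> simp [clift, mconj, Matrix.fromBlocks]
  · intro hspec
    obtain ⟨Y, hYeq, hYuniq⟩ :=
      stein_existsUnique (clift A1 A2) (clift F1 F2) (clift C1 C2) hspec
    have hYs : sconj Y = Y := by
      apply hYuniq
      calc sconj Y = sconj (clift A1 A2 * Y * clift F1 F2 + clift C1 C2) := by rw [← hYeq]
        _ = clift A1 A2 * sconj Y * clift F1 F2 + clift C1 C2 := by
            rw [sconj_add, sconj_mul, sconj_mul, sconj_clift, sconj_clift, sconj_clift]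
    have hYc := eq_clift_of_sconj_eq hYs
    refine ⟨(Y.toBlocks₁₁, Y.toBlocks₂₁), ?_, ?_⟩
    · exact (solves_iff A1 A2 F1 F2 C1 C2 Y.toBlocks₁₁ Y.toBlocks₂₁).2 (by rw [← hYc]; exact hYeq)
    · rintro ⟨Z1, Z2⟩ hZ
      have hZc := (solves_iff A1 A2 F1 F2 C1 C2 Z1 Z2).1 hZ
      have hZY := hYuniq (clift Z1 Z2) hZc
      rw [hYc] at hZY
      obtain ⟨e1, e2⟩ := clift_inj hZY
      rw [Prod.mk.injEq]
      exact ⟨e1, e2⟩
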